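/- arXiv:1603.08975 — 3 statements merged into one kernel-verified Lean document; each statement's English description precedes it below -/
import Mathlib

section
/- Clever summation-by-parts identity: for every configuration η, x ∈ ℤ, and ℓ ≥ 1, η⃗^ℓ(x)(η̄(x) − η⃗^ℓ(x)) + (η̄(x)−η̄(x+1))²/(2ℓ) = (1/ℓ)Σ_{y=x+1}^{x+ℓ} η⃗^ℓ(x)(η̄(x+1)−η̄(y)) + ((ℓ−1)/ℓ) η⃗^{ℓ−1}(x+1)(η̄(x)−η̄(x+1)) + (η̄(x)²−η̄(x+1)²)/(2ℓ). -/
/-- Right empirical average `η⃗^ℓ(x) = (1/ℓ) Σ_{y=x+1}^{x+ℓ} (η(y)-ρ)`. -/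
noncomputable def avgR (η : ℤ → ℝ) (ρ : ℝ) (ℓ : ℕ) (x : ℤ) : ℝ :=
  ((ℓ:ℝ))⁻¹ * ∑ y ∈ Finset.Icc (x + 1) (x + (ℓ:ℤ)), (η y - ρ)

/-- Clever summation-by-parts identity used in the treatment of the last term of the
decomposition for the second order Boltzmann–Gibbs principle. -/
theorem clever_decomposition (η : ℤ → ℝ) (ρ : ℝ) (x : ℤ) (ℓ : ℕ) (hℓ : 1 ≤ ℓ) :
    avgR η ρ ℓ x * ((η x - ρ) - avgR η ρ ℓ x)
      + ((η x - ρ) - (η (x + 1) - ρ)) ^ 2 / (2 * ℓ) =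
    ((ℓ:ℝ))⁻¹ * (∑ y ∈ Finset.Icc (x + 1) (x + (ℓ:ℤ)),
        avgR η ρ ℓ x * ((η (x + 1) - ρ) - (η y - ρ)))
      + ((ℓ:ℝ) - 1) / (ℓ:ℝ) * avgR η ρ (ℓ - 1) (x + 1) * ((η x - ρ) - (η (x + 1) - ρ))
      + ((η x - ρ) ^ 2 - (η (x + 1) - ρ) ^ 2) / (2 * ℓ) := by
  set a := η x - ρ with ha
  set b := η (x + 1) - ρ with hb
  set S := ∑ y ∈ Finset.Icc (x + 1) (x + (ℓ:ℤ)), (η y - ρ) with hS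
  have hcard : (Finset.Icc (x + 1) (x + (ℓ:ℤ))).card = ℓ := by
    rw [Int.card_Icc]; omega
  have hsum1 : (∑ y ∈ Finset.Icc (x + 1) (x + (ℓ:ℤ)),
      avgR η ρ ℓ x * (b - (η y - ρ))) = (ℓ:ℝ) * (avgR η ρ ℓ x * b) - avgR η ρ ℓ x * S := by
    rw [← Finset.mul_sum, Finset.sum_sub_distrib, Finset.sum_const, hcard]
    ring
  rcases eq_or_lt_of_le hℓ with h1 | h2
  · -- ℓ = 1
    subst h1
    have hIcc : Finset.Icc (x + 1) (x + (1:ℤ)) = {x + 1} := by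
      rw [Finset.Icc_self]
    simp only [avgR, Nat.cast_one, hIcc, Finset.sum_singleton] at *
    ring
  · -- ℓ ≥ 2
    have hℓ2 : 2 ≤ ℓ := h2
    have hmem : (x + 1) ∈ Finset.Icc (x + 1) (x + (ℓ:ℤ)) := by
      simp only [Finset.mem_Icc]; omega
    have hsplit : S = b + ∑ y ∈ (Finset.Icc (x + 1) (x + (ℓ:ℤ))).erase (x + 1),
        (η y - ρ) := by
      rw [hS, ← Finset.add_sum_erase _ _ hmem]
    have herase : (Finset.Icc (x + 1) (x + (ℓ:ℤ))).erase (x + 1)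
        = Finset.Icc (x + 1 + 1) (x + 1 + ((ℓ - 1 : ℕ) : ℤ)) := by
      rw [Finset.Icc_erase_left]
      have : x + 1 + ((ℓ - 1 : ℕ) : ℤ) = x + (ℓ:ℤ) := by omega
      rw [this]
      ext y
      simp only [Finset.mem_Ioc, Finset.mem_Icc]
      omega
    have havg' : avgR η ρ (ℓ - 1) (x + 1) = ((ℓ:ℝ) - 1)⁻¹ * (S - b) := by
      rw [avgR, ← herase]
      have hc : ((ℓ - 1 : ℕ) : ℝ) = (ℓ:ℝ) - 1 := by rw [Nat.cast_sub hℓ]; norm_num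
      rw [hc]
      congr 1
      rw [hsplit]; ring
    have hℓ0 : (ℓ:ℝ) ≠ 0 := by positivity
    have hℓ1 : (ℓ:ℝ) - 1 ≠ 0 := by
      have : (2:ℝ) ≤ (ℓ:ℝ) := by exact_mod_cast hℓ2
      linarith
    rw [hsum1, havg']
    rw [avgR, ← hS]
    field_simp
    ring
end

section
/- Existence of an exchange path via a mobile cluster (m=2): if a configuration η ∈ {0,1}^ℤ contains a mobile cluster in the box {x+ℓ+1,...,x+ℓ+ℓ₀} (i.e. two occupied sites at distance ≤ 2 there), then for any sites x+y, x+z with 1 ≤ y < z ≤ ℓ there exists N ≤ C(ℓ+ℓ₀) and a sequence of bonds {x^{(i)}, x^{(i)}+1} ⊂ {x+1,...,x+ℓ+ℓ₀}, i = 0,...,N−1, such that setting η^{(0)} = η and η^{(i+1)} = (η^{(i)})^{x^{(i)},x^{(i)}+1}, all jump rates are positive (c_{x^{(i)},x^{(i)}+1}(η^{(i)}) ≥ 1 and the exchanged occupations differ when a particle moves), the final configuration is η^{x+y,x+z}, and no bond value x^{(i)} is repeated more than six times. -/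
/-- Exchange of the occupation values at sites `a` and `b`. -/
def swapSites (η : ℤ → Bool) (a b : ℤ) : ℤ → Bool := fun w =>
  if w = a then η b else if w = b then η a else η w

/-!
Two adjacent particles form a mobile block: it slides past an occupied site by merely changing
which two particles are regarded as the pair, and past an empty site by two exchanges that carry
the hole to its other side. The blocks `0 1 1` (a hole followed by a pair) and `1 1 1` slide in
the same way. To exchange a particle at `a` with a hole at `b`, slide the pair down to `b + 1`;
with the hole it forms a `0 1 1`, which slides down to `a` and leaves the particle from `a`
behind the pair, i.e. a `1 1 1` at `a + 1`. Sliding this triple up to `b` gives the exchanged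
configuration with the pair still at `b + 1`, and the pair goes back up. Moves up are reversed
slides down, exchanges being reversible. A block of length `k` crosses each bond at most `k`
times and its topmost bond only once, which gives the bound six.
-/

namespace ExchangePath

theorem card_filter_getD_eq_count {α : Type*} [DecidableEq α] (L : List α) (d w : α) :
    ((Finset.range L.length).filter (fun i => L.getD i d = w)).card = L.count w := by
  induction L with
  | nil => simp
  | cons v L ih =>
    rw [Finset.card_filter, List.length_cons, Finset.sum_range_succ', List.count_cons] at *
    simp only [List.getD_cons_succ, List.getD_cons_zero, ih, beq_iff_eq]

theorem length_le_of_count_le {α : Type*} [DecidableEq α] {L : List α} {S : Finset α} {m : ℕ}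
    (hS : ∀ w ∈ L, w ∈ S) (hm : ∀ w, L.count w ≤ m) : L.length ≤ m * S.card := by
  rw [← List.sum_toFinset_count_eq_length]
  calc ∑ w ∈ L.toFinset, L.count w ≤ ∑ _w ∈ L.toFinset, m := Finset.sum_le_sum fun w _ => hm w
    _ = m * L.toFinset.card := by rw [Finset.sum_const, smul_eq_mul, mul_comm]
    _ ≤ m * S.card :=
      Nat.mul_le_mul_left m (Finset.card_le_card fun w hw => hS w (List.mem_toFinset.mp hw))

@[simp] theorem swapSites_apply_left (σ : ℤ → Bool) (a b : ℤ) : swapSites σ a b a = σ b := by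
  simp [swapSites]

@[simp] theorem swapSites_apply_right (σ : ℤ → Bool) (a b : ℤ) : swapSites σ a b b = σ a := by
  simp +contextual [swapSites]

theorem swapSites_apply_of_ne (σ : ℤ → Bool) {a b u : ℤ} (ha : u ≠ a) (hb : u ≠ b) :
    swapSites σ a b u = σ u := by
  simp [swapSites, ha, hb]

theorem swapSites_swapSites (σ : ℤ → Bool) (a b : ℤ) : swapSites (swapSites σ a b) a b = σ := by
  funext u
  unfold swapSites
  split_ifs <;> simp_all

theorem swapSites_of_eq {σ : ℤ → Bool} {a b : ℤ} (h : σ a = σ b) : swapSites σ a b = σ := by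
  funext u
  unfold swapSites
  split_ifs <;> simp_all

/-- The rate `c_{w,w+1}(σ) = σ (w - 1) + σ (w + 2)` is positive and the exchange across the bond
`{w, w + 1}` moves a particle. -/
def Allowed (σ : ℤ → Bool) (w : ℤ) : Prop :=
  (σ (w - 1) = true ∨ σ (w + 2) = true) ∧ σ w ≠ σ (w + 1)

theorem allowed_swapSites {σ : ℤ → Bool} {w : ℤ} (h : Allowed σ w) :
    Allowed (swapSites σ w (w + 1)) w := by
  obtain ⟨hc, hne⟩ := h
  refine ⟨?_, ?_⟩
  · rwa [swapSites_apply_of_ne _ (by omega) (by omega),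
      swapSites_apply_of_ne _ (by omega) (by omega)]
  · rw [swapSites_apply_left, swapSites_apply_right]
    exact hne.symm

inductive Path : (ℤ → Bool) → List ℤ → (ℤ → Bool) → Prop
  | nil (σ : ℤ → Bool) : Path σ [] σ
  | cons {σ τ : ℤ → Bool} {w : ℤ} {L : List ℤ} :
      Allowed σ w → Path (swapSites σ w (w + 1)) L τ → Path σ (w :: L) τ

theorem path_nil_iff {σ τ : ℤ → Bool} : Path σ [] τ ↔ σ = τ :=
  ⟨by rintro ⟨⟩; rfl, by rintro rfl; exact .nil σ⟩

theorem path_cons_iff {σ τ : ℤ → Bool} {w : ℤ} {L : List ℤ} :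
    Path σ (w :: L) τ ↔ Allowed σ w ∧ Path (swapSites σ w (w + 1)) L τ :=
  ⟨by rintro ⟨⟩; constructor <;> assumption, fun h => .cons h.1 h.2⟩

theorem path_single {σ : ℤ → Bool} {w : ℤ} (h : Allowed σ w) :
    Path σ [w] (swapSites σ w (w + 1)) :=
  .cons h (.nil _)

namespace Path

theorem append {σ τ ρ : ℤ → Bool} {L M : List ℤ} (h₁ : Path σ L τ) (h₂ : Path τ M ρ) :
    Path σ (L ++ M) ρ := by
  induction h₁ with
  | nil => exact h₂
  | cons hw _ ih => exact cons hw (ih h₂)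

theorem reverse {σ τ : ℤ → Bool} {L : List ℤ} (h : Path σ L τ) : Path τ L.reverse σ := by
  induction h with
  | nil => exact nil _
  | @cons σ τ w L hw _ ih =>
    rw [List.reverse_cons]
    refine ih.append (cons (allowed_swapSites hw) ?_)
    rw [swapSites_swapSites]
    exact nil σ

theorem exists_seq {σ τ : ℤ → Bool} {L : List ℤ} (h : Path σ L τ) :
    ∃ ηs : ℕ → ℤ → Bool, ηs 0 = σ ∧ ηs L.length = τ ∧ ∀ i < L.length,
      Allowed (ηs i) (L.getD i 0) ∧
        ηs (i + 1) = swapSites (ηs i) (L.getD i 0) (L.getD i 0 + 1) := by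
  induction h with
  | nil σ => exact ⟨fun _ => σ, rfl, rfl, by simp⟩
  | @cons σ τ w L hw _ ih =>
    obtain ⟨ηs, h₀, hlast, hstep⟩ := ih
    refine ⟨fun | 0 => σ | i + 1 => ηs i, rfl, hlast, fun i hi => ?_⟩
    rcases i with _ | i
    · exact ⟨hw, by simpa using h₀⟩
    · simpa using hstep i (by simpa using hi)

end Path

/-- The block of length `k` at `[s, s + k)` moved to `[t, t + k)`, the sites `[t, s)` it passes
being shifted to `[t + k, s + k)`. -/
def slideLeft (σ : ℤ → Bool) (t s : ℤ) (k : ℕ) : ℤ → Bool := fun u =>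
  if t ≤ u ∧ u < t + k then σ (u + (s - t))
  else if t + k ≤ u ∧ u < s + k then σ (u - k)
  else σ u

def HasBlock (σ : ℤ → Bool) (p : ℤ) (B : List Bool) : Prop :=
  ∀ i (hi : i < B.length), σ (p + i) = B[i]

theorem hasBlock_pair {σ : ℤ → Bool} {p : ℤ} {c₀ c₁ : Bool} :
    HasBlock σ p [c₀, c₁] ↔ σ p = c₀ ∧ σ (p + 1) = c₁ := by
  refine ⟨fun h => ⟨by simpa using h 0 (by simp), by simpa using h 1 (by simp)⟩, ?_⟩
  rintro ⟨h₀, h₁⟩ i hi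
  simp only [List.length_cons, List.length_nil] at hi
  interval_cases i <;> simpa

theorem hasBlock_triple {σ : ℤ → Bool} {p : ℤ} {c₀ c₁ c₂ : Bool} :
    HasBlock σ p [c₀, c₁, c₂] ↔ σ p = c₀ ∧ σ (p + 1) = c₁ ∧ σ (p + 2) = c₂ := by
  refine ⟨fun h => ⟨by simpa using h 0 (by simp), by simpa using h 1 (by simp),
    by simpa using h 2 (by simp)⟩, ?_⟩
  rintro ⟨h₀, h₁, h₂⟩ i hi
  simp only [List.length_cons, List.length_nil] at hi
  interval_cases i <;> simpa

theorem slideLeft_self (σ : ℤ → Bool) (s : ℤ) (k : ℕ) : slideLeft σ s s k = σ := by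
  funext u
  simp only [slideLeft, sub_self, add_zero]
  split_ifs <;> first | rfl | omega

theorem slideLeft_slideLeft (σ : ℤ → Bool) {t s : ℤ} (hts : t ≤ s) (k : ℕ) :
    slideLeft (slideLeft σ s (s + 1) k) t s k = slideLeft σ t (s + 1) k := by
  funext u
  simp only [slideLeft]
  split_ifs <;> first | omega | exact congrArg σ (by omega)

theorem slideLeft_apply_of_lt (σ : ℤ → Bool) {t s u : ℤ} (k : ℕ) (hu : u < t) :
    slideLeft σ t s k u = σ u := by
  simp only [slideLeft]
  split_ifs <;> first | rfl | omega

theorem slideLeft_swapSites (σ : ℤ → Bool) {a b t s : ℤ} (k : ℕ) (hts : t ≤ s) (ha : a < t)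
    (hb : b < t) : slideLeft (swapSites σ a b) t s k = swapSites (slideLeft σ t s k) a b := by
  funext u
  simp only [slideLeft, swapSites]
  split_ifs <;> first | rfl | omega

theorem hasBlock_slideLeft {σ : ℤ → Bool} {s : ℤ} {B : List Bool} (h : HasBlock σ s B) (t : ℤ) :
    HasBlock (slideLeft σ t s B.length) t B := by
  intro i hi
  rw [← h i hi]
  simp only [slideLeft]
  split_ifs <;> exact congrArg σ (by omega)

def CanPass (B : List Bool) : Prop :=
  ∀ σ p, HasBlock σ p B → ∃ L, Path σ L (slideLeft σ (p - 1) p B.length) ∧ L.Nodup ∧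
    ∀ w ∈ L, p - 1 ≤ w ∧ w ≤ p + B.length - 2

theorem CanPass.exists_path {B : List Bool} (hB : CanPass B) {t s : ℤ} (hts : t ≤ s)
    {σ : ℤ → Bool} (hσ : HasBlock σ s B) :
    ∃ L, Path σ L (slideLeft σ t s B.length) ∧ (∀ w ∈ L, t ≤ w ∧ w ≤ s + B.length - 2) ∧
      ∀ w, L.count w ≤ B.length ∧ L.count w ≤ (s + B.length - 1 - w).toNat := by
  induction s, hts using Int.leInduction generalizing σ with
  | base => exact ⟨[], by rw [slideLeft_self]; exact .nil σ, by simp, by simp⟩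
  | succ s hts ih =>
    obtain ⟨L₀, hpath₀, hnodup, hmem₀⟩ := hB σ (s + 1) hσ
    rw [add_sub_cancel_right] at hpath₀ hmem₀
    obtain ⟨L₁, hpath₁, hmem₁, hcount₁⟩ := ih (hasBlock_slideLeft hσ s)
    refine ⟨L₀ ++ L₁, ?_, ?_, fun w => ?_⟩
    · rw [← slideLeft_slideLeft σ hts]
      exact hpath₀.append hpath₁
    · intro w hw
      rcases List.mem_append.mp hw with hw | hw
      · have := hmem₀ w hw; omega
      · have := hmem₁ w hw; omega
    · have h₀ : L₀.count w ≤ 1 := List.nodup_iff_count_le_one.mp hnodup w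
      have h₀' : ¬(s ≤ w ∧ w ≤ s + B.length - 1) → L₀.count w = 0 := fun hw =>
        List.count_eq_zero_of_not_mem fun hw' => by have := hmem₀ w hw'; omega
      have := hcount₁ w
      rw [List.count_append]
      omega

theorem canPass_pair : CanPass [true, true] := by
  intro σ p h
  obtain ⟨h₀, h₁⟩ := hasBlock_pair.mp h
  by_cases hc : σ (p - 1) = true
  · refine ⟨[], ?_, List.nodup_nil, by simp⟩
    rw [path_nil_iff]
    funext u
    grind [slideLeft]
  · refine ⟨[p - 1, p], ?_, by simp, by simp⟩
    simp only [path_cons_iff, path_nil_iff, Allowed, funext_iff]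
    grind [swapSites, slideLeft]

theorem canPass_holePair : CanPass [false, true, true] := by
  intro σ p h
  obtain ⟨h₀, h₁, h₂⟩ := hasBlock_triple.mp h
  by_cases hc : σ (p - 1) = true
  · refine ⟨[p - 1], ?_, by simp, by simp; omega⟩
    simp only [path_cons_iff, path_nil_iff, Allowed, funext_iff]
    grind [swapSites, slideLeft]
  · refine ⟨[p, p + 1], ?_, by simp, by simp; omega⟩
    simp only [path_cons_iff, path_nil_iff, Allowed, funext_iff]
    grind [swapSites, slideLeft]

theorem canPass_triple : CanPass [true, true, true] := by
  intro σ p h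
  obtain ⟨h₀, h₁, h₂⟩ := hasBlock_triple.mp h
  by_cases hc : σ (p - 1) = true
  · refine ⟨[], ?_, List.nodup_nil, by simp⟩
    rw [path_nil_iff]
    funext u
    grind [slideLeft]
  · refine ⟨[p - 1, p, p + 1], ?_, by simp; omega, by simp; omega⟩
    simp only [path_cons_iff, path_nil_iff, Allowed, funext_iff]
    grind [swapSites, slideLeft]

theorem slideLeft_swapSites_eq_slideLeft (σ : ℤ → Bool) {a b : ℤ} (hab : a < b)
    (ha : σ a = true) (hb : σ b = false) (hb₁ : σ (b + 1) = true) (hb₂ : σ (b + 2) = true) :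
    slideLeft (swapSites σ a b) (a + 1) b 3 = slideLeft σ a b 3 := by
  funext u
  grind [slideLeft, swapSites]

theorem exists_path_swapSites_of_adjacent_pair (σ : ℤ → Bool) {a b : ℤ} (hab : a < b)
    (ha : σ a = true) (hb : σ b = false) (hb₁ : σ (b + 1) = true) (hb₂ : σ (b + 2) = true) :
    ∃ L, Path σ L (swapSites σ a b) ∧ (∀ w ∈ L, a ≤ w ∧ w ≤ b + 1) ∧
      (∀ w, L.count w ≤ 6) ∧ L.count (b + 1) ≤ 2 := by
  obtain ⟨L₁, hpath₁, hmem₁, hcount₁⟩ :=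
    canPass_holePair.exists_path hab.le (hasBlock_triple.mpr ⟨hb, hb₁, hb₂⟩)
  obtain ⟨L₂, hpath₂, hmem₂, hcount₂⟩ := canPass_triple.exists_path (t := a + 1) (by omega)
    (hasBlock_triple.mpr ⟨by simpa using ha,
      by rwa [swapSites_apply_of_ne _ (by omega) (by omega)],
      by rwa [swapSites_apply_of_ne _ (by omega) (by omega)]⟩ : HasBlock (swapSites σ a b) b _)
  simp only [List.length_cons, List.length_nil] at hpath₁ hmem₁ hcount₁ hpath₂ hmem₂ hcount₂
  rw [slideLeft_swapSites_eq_slideLeft σ hab ha hb hb₁ hb₂] at hpath₂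
  refine ⟨L₁ ++ L₂.reverse, hpath₁.append hpath₂.reverse, fun w hw => ?_, fun w => ?_, ?_⟩
  · rcases List.mem_append.mp hw with hw | hw
    · have := hmem₁ w hw; omega
    · have := hmem₂ w (List.mem_reverse.mp hw); omega
  · have := hcount₁ w; have := hcount₂ w
    rw [List.count_append, List.count_reverse]; omega
  · have := hcount₁ (b + 1); have := hcount₂ (b + 1)
    rw [List.count_append, List.count_reverse]; omega

theorem exists_path_swapSites_of_pair (σ : ℤ → Bool) {a b u : ℤ} (hab : a < b) (hbu : b < u)
    (ha : σ a = true) (hb : σ b = false) (hu : σ u = true) (hu₁ : σ (u + 1) = true) :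
    ∃ L, Path σ L (swapSites σ a b) ∧ (∀ w ∈ L, a ≤ w ∧ w ≤ u) ∧ ∀ w, L.count w ≤ 6 := by
  obtain ⟨L₁, hpath₁, hmem₁, hcount₁⟩ :=
    canPass_pair.exists_path (t := b + 1) (by omega) (hasBlock_pair.mpr ⟨hu, hu₁⟩)
  obtain ⟨hσ₁, hσ₁'⟩ :=
    hasBlock_pair.mp (hasBlock_slideLeft (hasBlock_pair.mpr ⟨hu, hu₁⟩) (b + 1))
  obtain ⟨Q, hpathQ, hmemQ, hcountQ, hcountQ'⟩ := exists_path_swapSites_of_adjacent_pair _ hab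
    (by rwa [slideLeft_apply_of_lt _ _ (by omega)]) (by rwa [slideLeft_apply_of_lt _ _ (by omega)])
    hσ₁ (by simpa [add_assoc] using hσ₁')
  -- the pair returns along the reverse of its slide in the exchanged configuration
  obtain ⟨L₂, hpath₂, hmem₂, hcount₂⟩ := canPass_pair.exists_path (t := b + 1) (by omega)
    (hasBlock_pair.mpr ⟨by rwa [swapSites_apply_of_ne _ (by omega) (by omega)],
      by rwa [swapSites_apply_of_ne _ (by omega) (by omega)]⟩ : HasBlock (swapSites σ a b) u _)
  simp only [List.length_cons, List.length_nil] at hmem₁ hcount₁ hmem₂ hcount₂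
  rw [slideLeft_swapSites σ _ (by omega) (by omega) (by omega)] at hpath₂
  refine ⟨L₁ ++ Q ++ L₂.reverse, (hpath₁.append hpathQ).append hpath₂.reverse,
    fun w hw => ?_, fun w => ?_⟩
  · simp only [List.mem_append, List.mem_reverse] at hw
    rcases hw with (hw | hw) | hw
    · have := hmem₁ w hw; omega
    · have := hmemQ w hw; omega
    · have := hmem₂ w hw; omega
  · have zero_of_le : ∀ M : List ℤ, (∀ v ∈ M, b + 1 ≤ v ∧ v ≤ u) → w ≤ b → M.count w = 0 :=
      fun M hM hw => List.count_eq_zero_of_not_mem fun h => by have := hM w h; omega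
    have hQ : b + 1 < w → Q.count w = 0 :=
      fun hw => List.count_eq_zero_of_not_mem fun h => by have := hmemQ w h; omega
    have := hcount₁ w; have := hcount₂ w; have := hcountQ w
    have := zero_of_le L₁ (by simpa using hmem₁); have := zero_of_le L₂ (by simpa using hmem₂)
    rw [List.count_append, List.count_append, List.count_reverse]
    rcases (by omega : w ≤ b ∨ w = b + 1 ∨ b + 1 < w) with hw | rfl | hw <;> omega

theorem exists_path_swapSites_of_cluster (σ : ℤ → Bool) {a b u v : ℤ} (hab : a < b)
    (hbu : b < u) (huv : u < v) (hvu : v ≤ u + 2) (ha : σ a = true) (hb : σ b = false)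
    (hu : σ u = true) (hv : σ v = true) :
    ∃ L, Path σ L (swapSites σ a b) ∧ (∀ w ∈ L, a ≤ w ∧ w < v) ∧ ∀ w, L.count w ≤ 6 := by
  by_cases hu₁ : σ (u + 1) = true
  · obtain ⟨L, hpath, hmem, hcount⟩ := exists_path_swapSites_of_pair σ hab hbu ha hb hu hu₁
    exact ⟨L, hpath, fun w hw => by have := hmem w hw; omega, hcount⟩
  obtain rfl : v = u + 2 := by
    rcases (by omega : v = u + 1 ∨ v = u + 2) with rfl | rfl
    · exact absurd hv hu₁
    · rfl
  -- fill the hole at `u + 1` before, and empty it again after, the exchange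
  set τ := swapSites σ (u + 1) (u + 1 + 1)
  have hstep : Allowed σ (u + 1) := by simp only [Allowed]; grind
  have hstep' : Allowed (swapSites σ a b) (u + 1) := by simp only [Allowed, swapSites]; grind
  have hcomm : swapSites (swapSites σ a b) (u + 1) (u + 1 + 1) = swapSites τ a b := by
    funext p; simp only [τ, swapSites]; grind
  obtain ⟨L, hpath, hmem, hcount⟩ := exists_path_swapSites_of_pair τ hab hbu
    (by simp only [τ, swapSites]; grind) (by simp only [τ, swapSites]; grind)
    (by simp only [τ, swapSites]; grind) (by simp only [τ, swapSites]; grind)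
  refine ⟨[u + 1] ++ L ++ [u + 1], ?_, fun w hw => ?_, fun w => ?_⟩
  · refine ((path_single hstep).append hpath).append ?_
    rw [← hcomm]
    exact (path_single hstep').reverse
  · simp only [List.mem_append, List.mem_singleton] at hw
    rcases hw with (rfl | hw) | rfl
    · omega
    · have := hmem w hw; omega
    · omega
  · have := hcount w
    have hL : L.count (u + 1) = 0 :=
      List.count_eq_zero_of_not_mem fun h => by have := hmem _ h; omega
    by_cases hw : w = u + 1
    · subst hw; simp [hL]
    · simp [Ne.symm hw, this]

theorem exists_path_swapSites (σ : ℤ → Bool) {a b u v : ℤ} (hab : a < b) (hbu : b < u)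
    (huv : u < v) (hvu : v ≤ u + 2) (hu : σ u = true) (hv : σ v = true) :
    ∃ L, Path σ L (swapSites σ a b) ∧ (∀ w ∈ L, a ≤ w ∧ w < v) ∧ ∀ w, L.count w ≤ 6 := by
  by_cases hσ : σ a = σ b
  · exact ⟨[], by rw [swapSites_of_eq hσ]; exact .nil σ, by simp, by simp⟩
  cases ha : σ a
  · -- a hole at `a` and a particle at `b`: reverse the path of the opposite exchange
    have hζu : swapSites σ a b u = true := by rwa [swapSites_apply_of_ne _ (by omega) (by omega)]
    have hζv : swapSites σ a b v = true := by rwa [swapSites_apply_of_ne _ (by omega) (by omega)]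
    obtain ⟨L, hpath, hmem, hcount⟩ := exists_path_swapSites_of_cluster _ hab hbu huv hvu
      (by simp_all) (by simp [ha]) hζu hζv
    rw [swapSites_swapSites] at hpath
    exact ⟨L.reverse, hpath.reverse, fun w hw => hmem w (List.mem_reverse.mp hw),
      fun w => by rw [List.count_reverse]; exact hcount w⟩
  · exact exists_path_swapSites_of_cluster σ hab hbu huv hvu ha (by simp_all) hu hv

end ExchangePath

/-- Existence of an exchange path via a mobile cluster (m = 2): if `η` contains a mobile
cluster in `{x+ℓ+1,…,x+ℓ+ℓ₀}`, then for any `1 ≤ y < z ≤ ℓ` there is a path of at most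
`C(ℓ+ℓ₀)` nearest-neighbour exchanges with positive rates, all within `{x+1,…,x+ℓ+ℓ₀}`,
leading from `η` to `η^{x+y,x+z}`, using every bond at most six times. -/
theorem exchange_path_exists :
    ∃ C : ℕ, 0 < C ∧
      ∀ (ℓ ℓ₀ : ℕ) (x y z : ℤ) (η : ℤ → Bool),
        0 < ℓ₀ → 1 ≤ y → y < z → z ≤ (ℓ:ℤ) →
        (∃ w w' : ℤ, x + (ℓ:ℤ) + 1 ≤ w ∧ w ≤ x + (ℓ:ℤ) + (ℓ₀:ℤ)
          ∧ x + (ℓ:ℤ) + 1 ≤ w' ∧ w' ≤ x + (ℓ:ℤ) + (ℓ₀:ℤ)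
          ∧ w ≠ w' ∧ |w - w'| ≤ 2 ∧ η w = true ∧ η w' = true) →
        ∃ (N : ℕ) (xs : ℕ → ℤ) (ηs : ℕ → (ℤ → Bool)),
          N ≤ C * (ℓ + ℓ₀)
          ∧ ηs 0 = η
          ∧ (∀ i < N, ηs (i + 1) = swapSites (ηs i) (xs i) (xs i + 1))
          ∧ ηs N = swapSites η (x + y) (x + z)
          ∧ (∀ i < N, x + 1 ≤ xs i ∧ xs i + 1 ≤ x + (ℓ:ℤ) + (ℓ₀:ℤ))
          ∧ (∀ i < N,
              (1 ≤ (if (ηs i) (xs i - 1) then (1:ℕ) else 0)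
                    + (if (ηs i) (xs i + 2) then (1:ℕ) else 0))
              ∧ (ηs i) (xs i) ≠ (ηs i) (xs i + 1))
          ∧ (∀ w : ℤ, ((Finset.range N).filter (fun i => xs i = w)).card ≤ 6) := by
  open ExchangePath in
  refine ⟨6, by norm_num, fun ℓ ℓ₀ x y z η _ hy hyz hz hcluster => ?_⟩
  obtain ⟨u, v, huv, hvu, hu, hv, hxu, hvx⟩ : ∃ u v, u < v ∧ v ≤ u + 2 ∧ η u = true ∧
      η v = true ∧ x + ℓ + 1 ≤ u ∧ v ≤ x + ℓ + ℓ₀ := by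
    obtain ⟨w, w', hw, hw₀, hw', hw'₀, hne, hdist, hηw, hηw'⟩ := hcluster
    have := abs_le.mp hdist
    rcases hne.lt_or_gt with h | h
    · exact ⟨w, w', h, by omega, hηw, hηw', hw, hw'₀⟩
    · exact ⟨w', w, h, by omega, hηw', hηw, hw', hw₀⟩
  obtain ⟨L, hpath, hmem, hcount⟩ :=
    exists_path_swapSites η (a := x + y) (b := x + z) (by omega) (by omega) huv hvu hu hv
  obtain ⟨ηs, h₀, hlast, hstep⟩ := hpath.exists_seq
  have hlength : L.length ≤ 6 * (ℓ + ℓ₀) := by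
    refine (length_le_of_count_le (S := Finset.Icc (x + 1) (x + ℓ + ℓ₀))
      (fun w hw => ?_) hcount).trans ?_
    · have := hmem w hw; simp only [Finset.mem_Icc]; omega
    · rw [Int.card_Icc]; omega
  refine ⟨L.length, fun i => L.getD i 0, ηs, hlength, h₀, fun i hi => (hstep i hi).2, hlast,
    fun i hi => ?_, fun i hi => ?_, fun w => by rw [card_filter_getD_eq_count]; exact hcount w⟩
  · have := hmem _ (List.getD_eq_getElem L 0 hi ▸ List.getElem_mem hi)
    beta_reduce; omega
  · obtain ⟨hrate, hne⟩ := (hstep i hi).1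
    exact ⟨by rcases hrate with h | h <;> rw [if_pos h] <;> omega, hne⟩
end

section
/- The Bernoulli(ρ) product measure is invariant for the kinetically constrained generator: for every local f : {0,1}^ℤ → ℝ, ∫ (L_n^m f)(η) ν_ρ(dη) = 0, where L_n^m f(η) = Σ_{|x−y|=1} c^m_{x,y}(η) p(y−x) η(x)(1−η(y)) (f(η^{x,y}) − f(η)). -/
open MeasureTheory

/-- Real-valued occupation variable. -/
def occ (η : ℤ → Bool) (z : ℤ) : ℝ := if η z then 1 else 0

/-- The kinetic constraint
`c^m_{x,x+1}(η) = Σ_{k=1}^m ∏_{j=-(m-k), j∉{0,1}}^{k} η(x+j)`. -/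
noncomputable def constraintC (m : ℕ) (x : ℤ) (η : ℤ → Bool) : ℝ :=
  ∑ k ∈ Finset.Icc 1 m,
    ∏ j ∈ (Finset.Icc ((k:ℤ) - (m:ℤ)) (k:ℤ)).filter (fun j => j ≠ 0 ∧ j ≠ 1),
      occ η (x + j)

/-- The generator of the kinetically constrained exclusion process, with
`p(1) = 1/2 + b/(2n^γ)`, `p(-1) = 1/2 - b/(2n^γ)`. -/
noncomputable def generator (m : ℕ) (b γ : ℝ) (n : ℕ)
    (f : (ℤ → Bool) → ℝ) (η : ℤ → Bool) : ℝ :=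
  ∑' x : ℤ,
    (constraintC m x η * (1 / 2 + b / (2 * (n:ℝ) ^ γ)) * occ η x * (1 - occ η (x + 1))
        * (f (swapSites η x (x + 1)) - f η)
      + constraintC m x η * (1 / 2 - b / (2 * (n:ℝ) ^ γ)) * occ η (x + 1) * (1 - occ η x)
        * (f (swapSites η (x + 1) x) - f η))

/-!
The exchange `η ↦ η^{x,x+1}` preserves `ν_ρ` (a product measure is determined by its cylinder
probabilities) and the constraint `c_x = c^m_{x,x+1}`, so the bond `(x, x + 1)` contributes
`(p(1) - p(-1)) ∫ c_x (η(x+1) - η(x)) f dν_ρ` to `∫ L f dν_ρ`. Counting windows of `m + 1` sites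
shows that `c_x (η(x+1) - η(x)) = h_x - h_{x+1}` is a discrete gradient, where `h_x`
(`constraintPotential`) is `c_x η(x+1)` minus the products of `η` over the `m + 1` blocks of `m`
consecutive sites starting in `[x + 1 - m, x + 1]`; it only involves sites within distance `m` of
`x + 1`. Only the bonds meeting the support of `f` contribute, so the sum telescopes to
`(p(1) - p(-1)) (∫ h_A f - ∫ h_B f)` with `A`, `B` far from that support. There independence of
the coordinates gives `∫ h_A f = ∫ h_A · ∫ f`, and `∫ h_x` does not depend on `x`, because
`∫ c_x (η(x+1) - η(x)) = 0` by the exchange symmetry once more.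
-/

open ProbabilityTheory

section DependsOn

variable {ι β : Type*} {α : ι → Type*} {f g : (Π i, α i) → β} {s : Set ι}

theorem DependsOn.sub [Sub β] (hf : DependsOn f s) (hg : DependsOn g s) :
    DependsOn (fun x => f x - g x) s :=
  fun _ _ h => congrArg₂ _ (hf h) (hg h)

theorem DependsOn.mul [Mul β] (hf : DependsOn f s) (hg : DependsOn g s) :
    DependsOn (fun x => f x * g x) s :=
  fun _ _ h => congrArg₂ _ (hf h) (hg h)

theorem DependsOn.finset_sum {κ : Type*} [AddCommMonoid β] {t : Finset κ}
    {F : κ → (Π i, α i) → β} (hF : ∀ k ∈ t, DependsOn (F k) s) :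
    DependsOn (fun x => ∑ k ∈ t, F k x) s :=
  fun _ _ h => Finset.sum_congr rfl fun k hk => hF k hk h

theorem DependsOn.finset_prod {κ : Type*} [CommMonoid β] {t : Finset κ}
    {F : κ → (Π i, α i) → β} (hF : ∀ k ∈ t, DependsOn (F k) s) :
    DependsOn (fun x => ∏ k ∈ t, F k x) s :=
  fun _ _ h => Finset.prod_congr rfl fun k hk => hF k hk h

end DependsOn

section IndependentCoordinates

variable {ι α : Type*} [Finite α] [MeasurableSpace α] [MeasurableSingletonClass α]
  {μ : Measure (ι → α)} {u g : (ι → α) → ℝ} {s t : Set ι}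

theorem DependsOn.integrable [IsFiniteMeasure μ] (hg : DependsOn g s) (hs : s.Finite) :
    Integrable g μ := by
  lift s to Finset ι using hs
  obtain ⟨ĝ, rfl⟩ := dependsOn_iff_exists_comp.mp hg
  exact Integrable.comp_measurable .of_finite (Set.measurable_restrict _)

theorem ProbabilityTheory.iIndepFun.integral_mul_of_dependsOn
    (hμ : iIndepFun (fun i (η : ι → α) => η i) μ) (hu : DependsOn u s) (hg : DependsOn g t)
    (hs : s.Finite) (ht : t.Finite) (hst : Disjoint s t) :
    ∫ η, u η * g η ∂μ = (∫ η, u η ∂μ) * ∫ η, g η ∂μ := by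
  lift s to Finset ι using hs
  lift t to Finset ι using ht
  obtain ⟨û, rfl⟩ := dependsOn_iff_exists_comp.mp hu
  obtain ⟨ĝ, rfl⟩ := dependsOn_iff_exists_comp.mp hg
  exact (hμ.indepFun_finset s t (Finset.disjoint_coe.mp hst) measurable_pi_apply)
    |>.integral_fun_comp_mul_comp (Set.measurable_restrict _).aemeasurable
      (Set.measurable_restrict _).aemeasurable .of_discrete .of_discrete

end IndependentCoordinates

section BernoulliProduct

variable {ι : Type*} {ρ : ℝ} {μ ν : Measure (ι → Bool)}

def IsBernoulliProduct (ρ : ℝ) (μ : Measure (ι → Bool)) : Prop :=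
  ∀ (S : Finset ι) (a : ι → Bool),
    μ {η | ∀ z ∈ S, η z = a z} = ∏ z ∈ S, ENNReal.ofReal (if a z then ρ else 1 - ρ)

variable (ι) in
def cylinderSets : Set (Set (ι → Bool)) :=
  {C | ∃ (S : Finset ι) (a : ι → Bool), C = {η | ∀ z ∈ S, η z = a z}}

theorem measurableSet_cylinder (S : Finset ι) (a : ι → Bool) :
    MeasurableSet {η : ι → Bool | ∀ z ∈ S, η z = a z} := by
  simp only [Set.ofPred_forall]
  exact Finset.measurableSet_biInter S fun z _ =>
    measurableSet_eq_fun (measurable_pi_apply z) measurable_const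

theorem isPiSystem_cylinderSets : IsPiSystem (cylinderSets ι) := by
  classical
  rintro _ ⟨S, a, rfl⟩ _ ⟨T, b, rfl⟩ ⟨η₀, hS, hT⟩
  refine ⟨S ∪ T, η₀, Set.ext fun η => ?_⟩
  simp only [Set.mem_inter_iff, Set.mem_ofPred_eq, Finset.mem_union] at hS hT ⊢
  constructor
  · rintro ⟨h₁, h₂⟩ z (hz | hz)
    · rw [h₁ z hz, hS z hz]
    · rw [h₂ z hz, hT z hz]
  · intro h
    exact ⟨fun z hz => (h z (.inl hz)).trans (hS z hz),
      fun z hz => (h z (.inr hz)).trans (hT z hz)⟩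

theorem generateFrom_cylinderSets :
    MeasurableSpace.generateFrom (cylinderSets ι) = MeasurableSpace.pi := by
  refine le_antisymm (MeasurableSpace.generateFrom_le ?_) ?_
  · rintro _ ⟨S, a, rfl⟩
    exact measurableSet_cylinder S a
  · have h (z : ι) :
        Measurable[MeasurableSpace.generateFrom (cylinderSets ι)] fun η : ι → Bool => η z :=
      @measurable_to_countable' Bool (ι → Bool) _ _ (.generateFrom _) _ fun b =>
        MeasurableSpace.measurableSet_generateFrom ⟨{z}, fun _ => b, by ext; simp⟩
    simpa [MeasurableSpace.comap_id] using
      measurable_iff_comap_le.mp (@measurable_pi_lambda _ _ _ (.generateFrom _) _ id h)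

theorem IsBernoulliProduct.isProbabilityMeasure (hμ : IsBernoulliProduct ρ μ) :
    IsProbabilityMeasure μ :=
  ⟨by simpa using hμ ∅ fun _ => true⟩

theorem IsBernoulliProduct.unique (hμ : IsBernoulliProduct ρ μ) (hν : IsBernoulliProduct ρ ν) :
    μ = ν := by
  have := hμ.isProbabilityMeasure
  have := hν.isProbabilityMeasure
  refine ext_of_generate_finite _ generateFrom_cylinderSets.symm isPiSystem_cylinderSets ?_
    (by simp)
  rintro _ ⟨S, a, rfl⟩
  rw [hμ, hν]

theorem IsBernoulliProduct.map_comp_perm (hμ : IsBernoulliProduct ρ μ) (τ : Equiv.Perm ι) :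
    IsBernoulliProduct ρ (μ.map (· ∘ τ)) := by
  intro S a
  rw [Measure.map_apply (by fun_prop) (measurableSet_cylinder S a)]
  have hpre : (· ∘ τ) ⁻¹' {η : ι → Bool | ∀ z ∈ S, η z = a z}
      = {η | ∀ w ∈ S.map τ.toEmbedding, η w = (a ∘ τ.symm) w} := by
    ext η
    simp only [Set.mem_preimage, Set.mem_ofPred_eq, Finset.mem_map_equiv, Function.comp_apply]
    exact ⟨fun h w hw => by simpa using h _ hw, fun h z hz => by simpa using h (τ z) (by simpa)⟩
  rw [hpre, hμ, Finset.prod_map]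
  simp

theorem IsBernoulliProduct.integral_comp_perm (hμ : IsBernoulliProduct ρ μ) (τ : Equiv.Perm ι)
    (g : (ι → Bool) → ℝ) : ∫ η, g (η ∘ τ) ∂μ = ∫ η, g η ∂μ :=
  MeasurePreserving.integral_comp ⟨by fun_prop, (hμ.map_comp_perm τ).unique hμ⟩
    (MeasurableEquiv.arrowCongr' τ.symm (.refl Bool)).measurableEmbedding g

theorem IsBernoulliProduct.iIndepFun (hμ : IsBernoulliProduct ρ μ) :
    iIndepFun (fun z (η : ι → Bool) => η z) μ := by
  have := hμ.isProbabilityMeasure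
  have (z : ι) : IsProbabilityMeasure (μ.map fun η => η z) :=
    Measure.isProbabilityMeasure_map (measurable_pi_apply z).aemeasurable
  rw [iIndepFun_iff_map_fun_eq_infinitePi_map measurable_pi_apply, Measure.map_id']
  refine hμ.unique fun S a => ?_
  have hbox : {η : ι → Bool | ∀ z ∈ S, η z = a z} = Set.pi S fun z => {a z} := by ext; simp
  rw [hbox, Measure.infinitePi_pi _ fun _ _ => measurableSet_singleton _]
  refine Finset.prod_congr rfl fun z _ => ?_
  rw [Measure.map_apply (measurable_pi_apply z) (measurableSet_singleton _)]
  exact (by simpa using hμ {z} a : μ {η | η z = a z} = _)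

end BernoulliProduct

open Finset in
theorem Int.sum_Ico_sub' {M : Type*} [AddCommGroup M] (φ : ℤ → M) {a b : ℤ} (hab : a ≤ b) :
    ∑ x ∈ Ico a b, (φ x - φ (x + 1)) = φ a - φ b := by
  induction b, hab using Int.leInduction with
  | base => simp
  | succ b hab ih =>
    rw [Ico_add_one_right_eq_Icc, ← Ico_insert_right hab, sum_insert right_notMem_Ico, ih]
    abel

noncomputable def constraintPotential (m : ℕ) (x : ℤ) (η : ℤ → Bool) : ℝ :=
  constraintC m x η * occ η (x + 1)
    - ∑ i ∈ Finset.range (m + 1), ∏ j ∈ Finset.Icc (x + 1 - m + i) (x + i), occ η j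

noncomputable def jumpRate (m : ℕ) (p q : ℝ) (x : ℤ) (η : ℤ → Bool) : ℝ :=
  constraintC m x η * (p * occ η x * (1 - occ η (x + 1)) + q * occ η (x + 1) * (1 - occ η x))

section Constraint

open Finset

variable (m : ℕ) (x : ℤ) (η : ℤ → Bool)

theorem constraintC_eq_sum_prod :
    constraintC m x η
      = ∑ k ∈ Icc 1 m, ∏ j ∈ ((Icc (x + k - m) (x + k)).erase (x + 1)).erase x, occ η j := by
  refine sum_congr rfl fun k _ => prod_nbij' (x + ·) (· - x) ?_ ?_ ?_ ?_ ?_ <;>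
    intro j hj <;> simp only [mem_filter, mem_erase, mem_Icc] at hj ⊢ <;> omega

theorem constraintC_mul_occ_left :
    constraintC m x η * occ η x
      = ∑ k ∈ Icc 1 m, ∏ j ∈ (Icc (x + k - m) (x + k)).erase (x + 1), occ η j := by
  rw [constraintC_eq_sum_prod, sum_mul]
  refine sum_congr rfl fun k hk => prod_erase_mul _ _ ?_
  simp only [mem_Icc, mem_erase] at hk ⊢
  omega

theorem constraintC_mul_occ_right :
    constraintC m x η * occ η (x + 1)
      = ∑ k ∈ Icc 1 m, ∏ j ∈ (Icc (x + k - m) (x + k)).erase x, occ η j := by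
  rw [constraintC_eq_sum_prod, sum_mul]
  refine sum_congr rfl fun k hk => ?_
  rw [erase_right_comm]
  refine prod_erase_mul _ _ ?_
  simp only [mem_Icc, mem_erase] at hk ⊢
  omega

/-- Both sides are the sum, over all windows `[a, a + m]` containing `x + 1`, of the product of
`occ η` over the window with `x + 1` removed. -/
theorem constraintC_mul_occ_add :
    constraintC m x η * occ η x + ∏ j ∈ Icc (x + 2) (x + m + 1), occ η j
      = constraintC m (x + 1) η * occ η (x + 2) + ∏ j ∈ Icc (x + 1 - m) x, occ η j := by
  let G (k : ℕ) : ℝ := ∏ j ∈ (Icc (x + k - m) (x + k)).erase (x + 1), occ η j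
  have hleft : constraintC m x η * occ η x = ∑ k ∈ Ico 1 (m + 1), G k := by
    rw [Ico_add_one_right_eq_Icc, constraintC_mul_occ_left]
  have hright :
      constraintC m (x + 1) η * occ η (x + 2) = ∑ k ∈ Ico 1 (m + 1), G (k + 1) := by
    rw [show x + 2 = x + 1 + 1 by ring, constraintC_mul_occ_right, Ico_add_one_right_eq_Icc]
    refine sum_congr rfl fun k _ => ?_
    simp only [G]
    congr 2
    push_cast
    congr 1 <;> ring
  have hfirst : G 1 = ∏ j ∈ Icc (x + 1 - m) x, occ η j := by
    simp only [G]
    congr 1; ext j; simp only [mem_erase, mem_Icc]; push_cast; omega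
  have hlast : G (m + 1) = ∏ j ∈ Icc (x + 2) (x + m + 1), occ η j := by
    simp only [G]
    congr 1; ext j; simp only [mem_erase, mem_Icc]; push_cast; omega
  have htel := sum_Ico_sub G (Nat.le_add_left 1 m)
  rw [sum_sub_distrib, ← hleft, ← hright, hfirst, hlast] at htel
  linarith

theorem constraintC_mul_occ_sub :
    constraintC m x η * (occ η (x + 1) - occ η x)
      = constraintPotential m x η - constraintPotential m (x + 1) η := by
  let B (i : ℕ) : ℝ := ∏ j ∈ Icc (x + 1 - m + i) (x + i), occ η j
  have hB : ∑ i ∈ range (m + 1), ∏ j ∈ Icc (x + 1 - m + i) (x + i), occ η j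
      = ∑ i ∈ range (m + 1), B i := rfl
  have hshift : ∑ i ∈ range (m + 1), ∏ j ∈ Icc (x + 1 + 1 - m + i) (x + 1 + i), occ η j
      = ∑ i ∈ range (m + 1), B (i + 1) := by
    refine sum_congr rfl fun i _ => ?_
    simp only [B]
    push_cast
    congr 2 <;> ring
  have hfirst : B 0 = ∏ j ∈ Icc (x + 1 - m) x, occ η j := by simp [B]
  have hlast : B (m + 1) = ∏ j ∈ Icc (x + 2) (x + m + 1), occ η j := by
    simp only [B]
    push_cast
    congr 2 <;> ring
  have htel := (sum_range_succ' B (m + 1)).symm.trans (sum_range_succ B (m + 1))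
  rw [hfirst, hlast] at htel
  have := constraintC_mul_occ_add m x η
  rw [constraintPotential, constraintPotential, hshift, hB, show x + 1 + 1 = x + 2 by ring]
  linarith

end Constraint

section Swap

variable (η : ℤ → Bool) (x y : ℤ)

theorem swapSites_eq_comp : swapSites η x y = η ∘ Equiv.swap x y := by
  funext w
  simp only [swapSites, Function.comp_apply, Equiv.swap_apply_def]
  split_ifs <;> rfl

theorem swapSites_comm : swapSites η x y = swapSites η y x := by
  rw [swapSites_eq_comp, swapSites_eq_comp, Equiv.swap_comm]

theorem swapSites_swapSites : swapSites (swapSites η x y) x y = η := by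
  funext w
  simp [swapSites_eq_comp]

theorem occ_swapSites_left : occ (swapSites η x y) x = occ η y := by
  simp [occ, swapSites]

theorem occ_swapSites_right : occ (swapSites η x y) y = occ η x := by
  rw [swapSites_comm, occ_swapSites_left]

theorem occ_swapSites_of_ne {z : ℤ} (hx : z ≠ x) (hy : z ≠ y) :
    occ (swapSites η x y) z = occ η z := by
  simp [occ, swapSites, hx, hy]

theorem DependsOn.comp_swapSites {f : (ℤ → Bool) → ℝ} {s : Set ℤ} (hf : DependsOn f s) :
    DependsOn (fun η => f (swapSites η x y)) (s ∪ {x, y}) := by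
  intro η η' h
  refine hf fun i hi => ?_
  simp only [swapSites_eq_comp, Function.comp_apply]
  refine h _ ?_
  rw [Equiv.swap_apply_def]
  split_ifs <;> simp_all

theorem DependsOn.apply_swapSites_eq {f : (ℤ → Bool) → ℝ} {s : Set ℤ} (hf : DependsOn f s)
    (hx : x ∉ s) (hy : y ∉ s) : f (swapSites η x y) = f η :=
  hf fun i hi => by
    rw [swapSites_eq_comp, Function.comp_apply, Equiv.swap_apply_of_ne_of_ne
      (fun h : i = x => hx (h ▸ hi)) (fun h : i = y => hy (h ▸ hi))]

theorem constraintC_swapSites (m : ℕ) :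
    constraintC m x (swapSites η x (x + 1)) = constraintC m x η := by
  simp only [constraintC_eq_sum_prod]
  refine Finset.sum_congr rfl fun k _ => Finset.prod_congr rfl fun j hj => ?_
  simp only [Finset.mem_erase] at hj
  exact occ_swapSites_of_ne η x (x + 1) hj.1 hj.2.1

theorem jumpRate_swapSites_sub (m : ℕ) (p q : ℝ) :
    jumpRate m p q x (swapSites η x (x + 1)) - jumpRate m p q x η
      = (p - q) * (constraintC m x η * (occ η (x + 1) - occ η x)) := by
  simp only [jumpRate, constraintC_swapSites, occ_swapSites_left, occ_swapSites_right]
  ring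

end Swap

section Locality

variable (m : ℕ) (x : ℤ)

theorem dependsOn_occ {z : ℤ} {s : Set ℤ} (hz : z ∈ s) : DependsOn (fun η => occ η z) s :=
  fun _ _ h => by simp only [occ, h z hz]

theorem dependsOn_constraintC : DependsOn (constraintC m x) (Set.Icc (x + 1 - m) (x + m)) :=
  DependsOn.finset_sum fun k hk => DependsOn.finset_prod fun j hj => dependsOn_occ <| by
    simp only [Finset.mem_Icc, Finset.mem_filter] at hk hj
    simp only [Set.mem_Icc]
    omega

theorem dependsOn_constraintPotential :
    DependsOn (constraintPotential m x) (Set.Icc (x + 1 - m) (x + 1 + m)) := by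
  refine (((dependsOn_constraintC m x).mono ?_).mul (dependsOn_occ ?_)).sub
    (DependsOn.finset_sum fun i hi => DependsOn.finset_prod fun j hj => dependsOn_occ ?_)
  · exact Set.Icc_subset_Icc le_rfl (by omega)
  · simp only [Set.mem_Icc]; omega
  · simp only [Finset.mem_Icc, Finset.mem_range] at hi hj
    simp only [Set.mem_Icc]
    omega

theorem dependsOn_jumpRate (p q : ℝ) :
    DependsOn (jumpRate m p q x) (Set.Icc (x - m) (x + 1 + m)) := by
  intro η η' h
  have hc : constraintC m x η = constraintC m x η' :=
    dependsOn_constraintC m x fun z hz => h z ⟨by linarith [hz.1], by linarith [hz.2]⟩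
  have hocc {z : ℤ} (hz₁ : x ≤ z) (hz₂ : z ≤ x + 1) : occ η z = occ η' z :=
    dependsOn_occ (s := Set.Icc (x - m) (x + 1 + m)) ⟨by omega, by omega⟩ h
  simp only [jumpRate, hc, hocc le_rfl (by omega), hocc (by omega) le_rfl]

end Locality

section Integrals

variable {ρ : ℝ} {μ : Measure (ℤ → Bool)}

theorem IsBernoulliProduct.integral_comp_swapSites (hμ : IsBernoulliProduct ρ μ)
    (φ : (ℤ → Bool) → ℝ) (x y : ℤ) : ∫ η, φ (swapSites η x y) ∂μ = ∫ η, φ η ∂μ := by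
  simp only [swapSites_eq_comp]
  exact hμ.integral_comp_perm _ φ

theorem IsBernoulliProduct.integral_mul_sub_swapSites (hμ : IsBernoulliProduct ρ μ)
    {u g : (ℤ → Bool) → ℝ} {s : Set ℤ} (hs : s.Finite) (hu : DependsOn u s)
    (hg : DependsOn g s) (x y : ℤ) :
    ∫ η, u η * (g (swapSites η x y) - g η) ∂μ
      = ∫ η, (u (swapSites η x y) - u η) * g η ∂μ := by
  have := hμ.isProbabilityMeasure
  have ht : (s ∪ {x, y}).Finite := hs.union (Set.toFinite _)
  have hu' := hu.mono (Set.subset_union_left (t := {x, y}))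
  have hg' := hg.mono (Set.subset_union_left (t := {x, y}))
  have hexchange :
      ∫ η, u η * g (swapSites η x y) ∂μ = ∫ η, u (swapSites η x y) * g η ∂μ := by
    rw [← hμ.integral_comp_swapSites _ x y]
    simp only [swapSites_swapSites]
  simp only [mul_sub, sub_mul]
  rw [integral_sub ((hu'.mul (hg.comp_swapSites x y)).integrable ht)
      ((hu'.mul hg').integrable ht),
    integral_sub (((hu.comp_swapSites x y).mul hg').integrable ht)
      ((hu'.mul hg').integrable ht),
    hexchange]

theorem IsBernoulliProduct.integral_jumpRate_mul_sub (hμ : IsBernoulliProduct ρ μ)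
    {f : (ℤ → Bool) → ℝ} {s : Set ℤ} (hs : s.Finite) (hf : DependsOn f s) (m : ℕ) (p q : ℝ)
    (x : ℤ) :
    ∫ η, jumpRate m p q x η * (f (swapSites η x (x + 1)) - f η) ∂μ
      = (p - q) * (∫ η, constraintPotential m x η * f η ∂μ
          - ∫ η, constraintPotential m (x + 1) η * f η ∂μ) := by
  have := hμ.isProbabilityMeasure
  let t := s ∪ Set.Icc (x - m) (x + 2 + m)
  have ht : t.Finite := hs.union (Set.finite_Icc _ _)
  have hf' : DependsOn f t := hf.mono Set.subset_union_left
  have hwindow {a b : ℤ} (ha : x - m ≤ a) (hb : b ≤ x + 2 + m) : Set.Icc a b ⊆ t :=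
    (Set.Icc_subset_Icc ha hb).trans Set.subset_union_right
  have hP₀ := (dependsOn_constraintPotential m x).mono (hwindow (by omega) (by omega))
  have hP₁ := (dependsOn_constraintPotential m (x + 1)).mono (hwindow (by omega) (by omega))
  have hJ := (dependsOn_jumpRate m x p q).mono (hwindow le_rfl (by omega))
  rw [hμ.integral_mul_sub_swapSites ht hJ hf', ← integral_sub ((hP₀.mul hf').integrable ht)
    ((hP₁.mul hf').integrable ht), ← integral_const_mul]
  congr 1
  funext η
  rw [jumpRate_swapSites_sub, constraintC_mul_occ_sub]
  ring

theorem IsBernoulliProduct.integral_tsum_jumpRate_mul_sub (hμ : IsBernoulliProduct ρ μ)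
    (m : ℕ) (p q : ℝ) {f : (ℤ → Bool) → ℝ} {A B : ℤ} (hAB : A ≤ B)
    (hf : DependsOn f (Set.Ioo A B)) :
    ∫ η, ∑' x, jumpRate m p q x η * (f (swapSites η x (x + 1)) - f η) ∂μ
      = (p - q) * (∫ η, constraintPotential m A η * f η ∂μ
          - ∫ η, constraintPotential m B η * f η ∂μ) := by
  have := hμ.isProbabilityMeasure
  have hsum (η : ℤ → Bool) : ∑' x, jumpRate m p q x η * (f (swapSites η x (x + 1)) - f η)
      = ∑ x ∈ Finset.Ico A B, jumpRate m p q x η * (f (swapSites η x (x + 1)) - f η) := by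
    refine tsum_eq_sum fun x hx => ?_
    rw [Finset.mem_Ico] at hx
    rw [hf.apply_swapSites_eq η x (x + 1) (by simp only [Set.mem_Ioo]; omega)
      (by simp only [Set.mem_Ioo]; omega), sub_self, mul_zero]
  have hint (x : ℤ) :
      Integrable (fun η => jumpRate m p q x η * (f (swapSites η x (x + 1)) - f η)) μ :=
    (((dependsOn_jumpRate m x p q).mono Set.subset_union_left).mul
      (((hf.comp_swapSites x (x + 1)).mono Set.subset_union_right).sub
        (hf.mono (Set.subset_union_left.trans Set.subset_union_right)))).integrable
      ((Set.finite_Icc _ _).union ((Set.finite_Ioo A B).union (Set.toFinite {x, x + 1})))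
  simp only [hsum]
  rw [integral_finsetSum _ fun x _ => hint x,
    ← Int.sum_Ico_sub' (fun x => ∫ η, constraintPotential m x η * f η ∂μ) hAB, Finset.mul_sum]
  exact Finset.sum_congr rfl fun x _ =>
    hμ.integral_jumpRate_mul_sub (Set.finite_Ioo A B) hf m p q x

theorem IsBernoulliProduct.integral_constraintPotential_mul (hμ : IsBernoulliProduct ρ μ)
    {f : (ℤ → Bool) → ℝ} {s : Set ℤ} (hs : s.Finite) (hf : DependsOn f s) (m : ℕ) (x : ℤ)
    (hdisj : Disjoint (Set.Icc (x + 1 - m) (x + 1 + m)) s) :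
    ∫ η, constraintPotential m x η * f η ∂μ
      = (∫ η, constraintPotential m x η ∂μ) * ∫ η, f η ∂μ :=
  hμ.iIndepFun.integral_mul_of_dependsOn (dependsOn_constraintPotential m x) hf
    (Set.finite_Icc _ _) hs hdisj

theorem IsBernoulliProduct.integral_constraintPotential_eq (hμ : IsBernoulliProduct ρ μ)
    (m : ℕ) (x y : ℤ) :
    ∫ η, constraintPotential m x η ∂μ = ∫ η, constraintPotential m y η ∂μ := by
  have := hμ.isProbabilityMeasure
  have hperiodic : Function.Periodic (fun x => ∫ η, constraintPotential m x η ∂μ) 1 := by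
    intro x
    have hc := (dependsOn_constraintC m x).mono
      (Set.Icc_subset_Icc (show x - m ≤ x + 1 - m by omega) (show x + m ≤ x + 1 + m by omega))
    have hint (z : ℤ) (hz : z ∈ Set.Icc (x - m) (x + 1 + m)) :
        Integrable (fun η => constraintC m x η * occ η z) μ :=
      (hc.mul (dependsOn_occ hz)).integrable (Set.finite_Icc _ _)
    have hexchange : ∫ η, constraintC m x η * occ η (x + 1) ∂μ
        = ∫ η, constraintC m x η * occ η x ∂μ := by
      rw [← hμ.integral_comp_swapSites _ x (x + 1)]
      simp only [constraintC_swapSites, occ_swapSites_right]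
    have hdiff := integral_sub (hint (x + 1) ⟨by omega, by omega⟩) (hint x ⟨by omega, by omega⟩)
    simp only [← mul_sub, constraintC_mul_occ_sub, hexchange, sub_self] at hdiff
    rw [integral_sub ((dependsOn_constraintPotential m x).integrable (Set.finite_Icc _ _))
      ((dependsOn_constraintPotential m (x + 1)).integrable (Set.finite_Icc _ _))] at hdiff
    exact (sub_eq_zero.mp hdiff).symm
  simpa using (hperiodic.int_mul_eq x).trans (hperiodic.int_mul_eq y).symm

end Integrals

theorem generator_eq_tsum (m : ℕ) (b γ : ℝ) (n : ℕ) (f : (ℤ → Bool) → ℝ) (η : ℤ → Bool) :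
    generator m b γ n f η = ∑' x, jumpRate m (1 / 2 + b / (2 * (n : ℝ) ^ γ))
      (1 / 2 - b / (2 * (n : ℝ) ^ γ)) x η * (f (swapSites η x (x + 1)) - f η) := by
  refine tsum_congr fun x => ?_
  rw [swapSites_comm η (x + 1) x, jumpRate]
  ring

theorem bernoulli_invariant_for_generator_general
    (m : ℕ) (b γ : ℝ) (n : ℕ)
    (ρ : ℝ)
    (μ : Measure (ℤ → Bool))
    (hiid : ∀ (S : Finset ℤ) (a : ℤ → Bool),
      μ {η | ∀ z ∈ S, η z = a z}
        = ∏ z ∈ S, ENNReal.ofReal (if a z then ρ else 1 - ρ))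
    (f : (ℤ → Bool) → ℝ)
    (hloc : ∃ S : Finset ℤ, ∀ η η' : ℤ → Bool,
      (∀ z ∈ S, η z = η' z) → f η = f η') :
    ∫ η, generator m b γ n f η ∂μ = 0 := by
  have hμ : IsBernoulliProduct ρ μ := hiid
  obtain ⟨S, hS⟩ := hloc
  obtain ⟨R, hR₀, hR⟩ : ∃ R : ℤ, 0 ≤ R ∧ ∀ z ∈ S, |z| ≤ R :=
    ⟨∑ z ∈ S, |z|, Finset.sum_nonneg fun z _ => abs_nonneg z,
      fun z hz => Finset.single_le_sum (fun z _ => abs_nonneg z) hz⟩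
  have hf : DependsOn f (Set.Icc (-R) R) :=
    fun η η' h => hS η η' fun z hz => h z (abs_le.mp (hR z hz))
  have hdisj (x : ℤ) (hx : x + 1 + m < -R ∨ R < x + 1 - m) :
      Disjoint (Set.Icc (x + 1 - m) (x + 1 + m)) (Set.Icc (-R) R) :=
    Set.disjoint_left.mpr fun z hz hz' => by simp only [Set.mem_Icc] at hz hz'; omega
  let A := -(R + m + 2)
  let B := R + m + 2
  simp only [generator_eq_tsum]
  rw [hμ.integral_tsum_jumpRate_mul_sub m _ _ (A := A) (B := B) (by omega)
      (hf.mono (Set.Icc_subset_Ioo (by omega) (by omega))),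
    hμ.integral_constraintPotential_mul (Set.finite_Icc _ _) hf m A (hdisj A (by omega)),
    hμ.integral_constraintPotential_mul (Set.finite_Icc _ _) hf m B (hdisj B (by omega)),
    hμ.integral_constraintPotential_eq m A B, sub_self, mul_zero]

/-- The Bernoulli(ρ) product measure is invariant for the kinetically constrained
generator: `∫ L_n^m f dν_ρ = 0` for every local `f`. -/
theorem bernoulli_invariant_for_generator
    (m : ℕ) (hm : 2 ≤ m) (b γ : ℝ) (n : ℕ) (hn : 0 < n)
    (ρ : ℝ) (hρ : ρ ∈ Set.Ioo (0:ℝ) 1)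
    (μ : Measure (ℤ → Bool)) [IsProbabilityMeasure μ]
    (hiid : ∀ (S : Finset ℤ) (a : ℤ → Bool),
      μ {η | ∀ z ∈ S, η z = a z}
        = ∏ z ∈ S, ENNReal.ofReal (if a z then ρ else 1 - ρ))
    (f : (ℤ → Bool) → ℝ) (hmeas : Measurable f)
    (hloc : ∃ S : Finset ℤ, ∀ η η' : ℤ → Bool,
      (∀ z ∈ S, η z = η' z) → f η = f η') :
    ∫ η, generator m b γ n f η ∂μ = 0 :=
  bernoulli_invariant_for_generator_general m b γ n ρ μ hiid f hloc
end
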